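/- For α > 0, λ > 0, and t > 0, the derivative with respect to t of t·E_{α,2}(-λ t^α) equals E_{α,1}(-λ t^α). -/

import Mathlib

/-- The real Mittag-Leffler function `E_{α,β}(x) = ∑ x^n / Γ(αn + β)`. -/
noncomputable def mittagLeffler (α β x : ℝ) : ℝ :=
  ∑' n : ℕ, x ^ n / Real.Gamma (α * n + β)

/-!
Termwise, `s * (c s^α)^n / Γ(αn + 2) = c^n s^(αn + 1) / Γ(αn + 2)` has derivative
`c^n s^(αn) / Γ(αn + 1)`, because `Γ(αn + 2) = (αn + 1) Γ(αn + 1)`. Differentiating under the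
sum is justified on `(0, t + 1)` by domination with the convergent series
`∑ (|c| (t + 1)^α)^n / Γ(αn + 1)`; convergence comes from `⌊x⌋! ≤ Γ(x + 1)`, so that
`R^x / Γ(x + 1)` decays like `(1/2)^x`.
-/

open Real Filter Set Topology
open scoped Nat

lemma factorial_floor_le_Gamma {x y : ℝ} (hx : 1 ≤ x) (hxy : x + 1 ≤ y) :
    (⌊x⌋₊ ! : ℝ) ≤ Gamma y := by
  have hk : (1 : ℝ) ≤ ⌊x⌋₊ := by exact_mod_cast Nat.le_floor (by simpa using hx)
  rw [← Gamma_nat_eq_factorial]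
  exact Gamma_strictMonoOn_Ici.monotoneOn (by simp; linarith) (by simp; linarith)
    (by linarith [Nat.floor_le (zero_le_one.trans hx)])

lemma rpow_div_Gamma_le {R x y : ℝ} (hR : 1 ≤ R) (hx : 1 ≤ x) (hxy : x + 1 ≤ y) :
    R ^ x / Gamma y ≤ 2 * R * exp (2 * R) * (1 / 2) ^ x := by
  set k := ⌊x⌋₊
  have hkx : x < k + 1 := Nat.lt_floor_add_one x
  have hpow : R ^ x ≤ R * R ^ k := by
    calc R ^ x ≤ R ^ ((k : ℝ) + 1) := rpow_le_rpow_of_exponent_le hR hkx.le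
      _ = R * R ^ k := by rw [rpow_add_one (by positivity), rpow_natCast, mul_comm]
  have hfact : R ^ k / k ! ≤ exp (2 * R) * (1 / 2) ^ k := by
    calc R ^ k / k ! = (2 * R) ^ k / k ! * (1 / 2) ^ k := by
          rw [div_mul_eq_mul_div, ← mul_pow]; ring_nf
      _ ≤ exp (2 * R) * (1 / 2) ^ k := by
        gcongr; exact pow_div_factorial_le_exp _ (by positivity) k
  have hhalf : ((1 : ℝ) / 2) ^ k ≤ 2 * (1 / 2) ^ x := by
    calc ((1 : ℝ) / 2) ^ k = (1 / 2) ^ (k : ℝ) := (rpow_natCast _ _).symm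
      _ ≤ (1 / 2) ^ (x - 1) :=
          rpow_le_rpow_of_exponent_ge (by norm_num) (by norm_num) (by linarith)
      _ = 2 * (1 / 2) ^ x := by rw [rpow_sub (by norm_num), rpow_one]; ring
  calc R ^ x / Gamma y ≤ R * R ^ k / k ! := by
        gcongr
        exact factorial_floor_le_Gamma hx hxy
    _ = R * (R ^ k / k !) := by ring
    _ ≤ R * (exp (2 * R) * (2 * (1 / 2) ^ x)) := by gcongr; exact hfact.trans (by gcongr)
    _ = 2 * R * exp (2 * R) * (1 / 2) ^ x := by ring

lemma summable_pow_div_Gamma {α β : ℝ} (hα : 0 < α) (hβ : 1 ≤ β) (r : ℝ) :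
    Summable fun n : ℕ => r ^ n / Gamma (α * n + β) := by
  set R := max 1 (|r| ^ α⁻¹)
  have hR : 1 ≤ R := le_max_left _ _
  have hrR : |r| ≤ R ^ α := by
    calc |r| = (|r| ^ α⁻¹) ^ α := by
          rw [← rpow_mul (abs_nonneg r), inv_mul_cancel₀ hα.ne', rpow_one]
      _ ≤ R ^ α := by gcongr; exact le_max_right _ _
  have hgeom : Summable fun n : ℕ => 2 * R * exp (2 * R) * ((1 / 2) ^ α) ^ n :=
    (summable_geometric_of_lt_one (by positivity)
      (rpow_lt_one (by norm_num) (by norm_num) hα)).mul_left _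
  refine hgeom.of_norm_bounded_eventually_nat ?_
  filter_upwards [eventually_ge_atTop ⌈α⁻¹⌉₊] with n hn
  have hαn : 1 ≤ α * n := by
    rw [← inv_mul_le_iff₀ hα, mul_one]; exact Nat.ceil_le.mp hn
  calc ‖r ^ n / Gamma (α * n + β)‖ = |r| ^ n / Gamma (α * n + β) := by
        rw [norm_div, norm_pow, Real.norm_eq_abs, Real.norm_of_nonneg (by positivity)]
    _ ≤ R ^ (α * n) / Gamma (α * n + β) := by
        rw [rpow_mul_natCast (by positivity)]; gcongr
    _ ≤ 2 * R * exp (2 * R) * (1 / 2) ^ (α * n) := rpow_div_Gamma_le hR hαn (by linarith)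
    _ = 2 * R * exp (2 * R) * ((1 / 2) ^ α) ^ n := by rw [rpow_mul_natCast (by norm_num)]

lemma hasDerivAt_mul_pow_div_Gamma {α : ℝ} (hα : 0 ≤ α) (c : ℝ) (n : ℕ) {t : ℝ} (ht : 0 < t) :
    HasDerivAt (fun s => s * ((c * s ^ α) ^ n / Gamma (α * n + 2)))
      ((c * t ^ α) ^ n / Gamma (α * n + 1)) t := by
  have hpow : ∀ {s : ℝ}, 0 < s → (c * s ^ α) ^ n = c ^ n * s ^ (α * n) := fun hs => by
    rw [mul_pow, rpow_mul_natCast hs.le]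
  have hGamma : Gamma (α * n + 2) = (α * n + 1) * Gamma (α * n + 1) := by
    rw [← Gamma_add_one (by positivity)]; ring_nf
  have hterm : (fun s => s * ((c * s ^ α) ^ n / Gamma (α * n + 2))) =ᶠ[𝓝 t]
      fun s => c ^ n / Gamma (α * n + 2) * s ^ (α * n + 1) := by
    filter_upwards [Ioi_mem_nhds ht] with s hs
    rw [hpow hs, rpow_add_one hs.ne']; ring
  have hderiv := ((hasDerivAt_rpow_const (p := α * n + 1) (Or.inl ht.ne')).const_mul
    (c ^ n / Gamma (α * n + 2))).congr_of_eventuallyEq hterm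
  refine hderiv.congr_deriv ?_
  rw [hpow ht, hGamma, add_sub_cancel_right]
  field_simp

lemma hasDerivAt_mul_mittagLeffler_two {α : ℝ} (hα : 0 < α) (c : ℝ) {t : ℝ} (ht : 0 < t) :
    HasDerivAt (fun s => s * mittagLeffler α 2 (c * s ^ α))
      (mittagLeffler α 1 (c * t ^ α)) t := by
  have hbound : ∀ (n : ℕ), ∀ s ∈ Ioo 0 (t + 1),
      ‖(c * s ^ α) ^ n / Gamma (α * n + 1)‖ ≤ (|c| * (t + 1) ^ α) ^ n / Gamma (α * n + 1) := by
    intro n s hs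
    rw [norm_div, norm_pow, norm_mul, Real.norm_eq_abs,
      Real.norm_of_nonneg (rpow_nonneg hs.1.le _), Real.norm_of_nonneg (by positivity)]
    gcongr
    exacts [mul_nonneg (abs_nonneg c) (rpow_nonneg hs.1.le _), hs.1.le, hs.2.le]
  have hderiv := hasDerivAt_tsum_of_isPreconnected (summable_pow_div_Gamma hα le_rfl _)
    isOpen_Ioo isPreconnected_Ioo (fun n s hs => hasDerivAt_mul_pow_div_Gamma hα.le c n hs.1) hbound
    (y₀ := t) ⟨ht, by linarith⟩ ((summable_pow_div_Gamma hα one_le_two _).mul_left t)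
    ⟨ht, by linarith⟩
  simpa only [mittagLeffler, tsum_mul_left] using hderiv

theorem deriv_mittagLeffler_two_general (α lam t : ℝ) (hα : 0 < α) (ht : 0 < t) :
    HasDerivAt (fun s : ℝ => s * mittagLeffler α 2 (-lam * s ^ α))
      (mittagLeffler α 1 (-lam * t ^ α)) t :=
  hasDerivAt_mul_mittagLeffler_two hα (-lam) ht

/-- For `α > 0`, `λ > 0`, `t > 0`:
`d/dt [t · E_{α,2}(-λ t^α)] = E_{α,1}(-λ t^α)`. -/
theorem deriv_mittagLeffler_two (α lam t : ℝ) (hα : 0 < α) (hlam : 0 < lam) (ht : 0 < t) :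
    HasDerivAt (fun s : ℝ => s * mittagLeffler α 2 (-lam * s ^ α))
      (mittagLeffler α 1 (-lam * t ^ α)) t :=
  deriv_mittagLeffler_two_general α lam t hα ht
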